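/- arXiv:1404.1279 — 4 statements merged into one kernel-verified Lean document; each statement's English description precedes it below -/
import Mathlib

section
/- Let G be a finite colored directed acyclic graph in which every non-colored node has at least two distinct successors (i.e., G is T-irreducible). Then every nonempty subgraph S consisting only of non-colored nodes has at least two successors outside S. -/
/-- In a finite colored DAG in which every non-colored node has at least two distinct
successors (T-irreducibility), every nonempty subgraph consisting only of non-colored
nodes has at least two successors outside itself. -/
theorem stmt2 {V : Type*} [Fintype V] (E : V → V → Prop) (C : Set V)
    (hacyc : ∀ v, ¬ Relation.TransGen E v v)
    (hirr : ∀ u, u ∉ C → ∃ v w, v ≠ w ∧ E u v ∧ E u w)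
    (S : Set V) (hS : S.Nonempty) (hSC : ∀ u ∈ S, u ∉ C) :
    ∃ v w, v ≠ w ∧ v ∉ S ∧ w ∉ S ∧ (∃ u ∈ S, E u v) ∧ (∃ u ∈ S, E u w) := by
  classical
  by_contra hcon
  push_neg at hcon
  have key : ∀ u ∈ S, ∃ v, v ∈ S ∧ E u v := by
    intro u hu
    obtain ⟨v, w, hvw, hv, hw⟩ := hirr u (hSC u hu)
    by_contra hns
    push_neg at hns
    have hvS : v ∉ S := fun h => hns v h hv
    have hwS : w ∉ S := fun h => hns w h hw
    exact hcon v w hvw hvS hwS ⟨u, hu, hv⟩ u hu hw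
  obtain ⟨u0, hu0⟩ := hS
  choose f hf1 hf2 using key
  let g : V → V := fun u => if h : u ∈ S then f u h else u
  have hstep : ∀ x (hx : x ∈ S), E x (g x) ∧ g x ∈ S := by
    intro x hx
    simp only [g, dif_pos hx]
    exact ⟨hf2 x hx, hf1 x hx⟩
  have hmem : ∀ n, g^[n] u0 ∈ S := by
    intro n
    induction n with
    | zero => simpa using hu0
    | succ n ih =>
      rw [Function.iterate_succ_apply']
      exact (hstep _ ih).2
  have htrans : ∀ n, Relation.TransGen E (g^[n] u0) (g^[n+1] u0) := by
    intro n
    rw [Function.iterate_succ_apply']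
    exact Relation.TransGen.single (hstep _ (hmem n)).1
  have hchain : ∀ m n, m < n → Relation.TransGen E (g^[m] u0) (g^[n] u0) := by
    intro m n h
    induction n with
    | zero => omega
    | succ n ih =>
      rcases Nat.lt_succ_iff_lt_or_eq.mp h with h' | h'
      · exact (ih h').trans (htrans n)
      · subst h'; exact htrans m
  obtain ⟨m, n, hmn, heq⟩ := Finite.exists_ne_map_eq_of_infinite (fun n : ℕ => g^[n] u0)
  rcases hmn.lt_or_gt with h | h
  · exact hacyc _ (heq ▸ hchain m n h)
  · exact hacyc _ (heq.symm ▸ hchain n m h)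
end

section
/- The T1 transformation preserves event traces: if a non-colored node n with a unique successor m is removed and each edge (p,n) is replaced by (p,m), then the set of event traces of paths from the entry node to the exit node is unchanged. -/
/-!
Since the only successor of `n` is `m`, a walk of `E` ending at `⊥ ≠ n` can only visit `n` in
a step `p, n, m`; deleting the visits of `n` turns these into redirected edges `(p, m)`.
Conversely, every redirected edge of a walk of the new graph expands back into `p, n, m`.
Since `n` is neither colored nor `⊤` or `⊥`, neither operation changes the trace.
-/

def IsWalkFromTo {V : Type*} (E : V → V → Prop) (a b : V) (l : List V) : Prop :=
  l ≠ [] ∧ l.head? = some a ∧ l.getLast? = some b ∧ l.Chain' E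

/-- The edge relation of the graph obtained from `E` by deleting `n` and redirecting every
edge `(p, n)` to `(p, m)`. -/
def bypass {V : Type*} (E : V → V → Prop) (n m : V) (u v : V) : Prop :=
  u ≠ n ∧ v ≠ n ∧ (E u v ∨ (E u n ∧ v = m))

namespace IsWalkFromTo

variable {V : Type*} {E : V → V → Prop} {a b : V}

theorem iff_isChain {l : List V} :
    IsWalkFromTo E a b l ↔ l ≠ [] ∧ l.head? = some a ∧ l.getLast? = some b ∧ l.IsChain E :=
  Iff.rfl

theorem cons_iff {x : V} {l : List V} :
    IsWalkFromTo E a b (x :: l) ↔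
      x = a ∧ (l = [] ∧ a = b ∨ ∃ c, E a c ∧ IsWalkFromTo E c b l) := by
  cases l with
  | nil => simp [iff_isChain]; rintro rfl; rfl
  | cons y l =>
    simp only [iff_isChain, List.isChain_cons_cons, List.head?_cons, List.getLast?_cons_cons,
      Option.some_inj, ne_eq, reduceCtorEq, not_false_eq_true, true_and, false_and, false_or]
    constructor
    · rintro ⟨rfl, hlast, hxy, hchain⟩
      exact ⟨rfl, y, hxy, rfl, hlast, hchain⟩
    · rintro ⟨rfl, c, hac, rfl, hlast, hchain⟩
      exact ⟨rfl, hlast, hac, hchain⟩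

theorem singleton_iff {x : V} : IsWalkFromTo E a b [x] ↔ x = a ∧ a = b := by
  simp [iff_isChain]; rintro rfl; rfl

theorem cons_cons_iff {x y : V} {l : List V} :
    IsWalkFromTo E a b (x :: y :: l) ↔ x = a ∧ E a y ∧ IsWalkFromTo E y b (y :: l) := by
  rw [cons_iff]
  constructor
  · rintro ⟨rfl, ⟨h, -⟩ | ⟨c, hac, hc⟩⟩
    · cases h
    · obtain rfl := (cons_iff.1 hc).1
      exact ⟨rfl, hac, hc⟩
  · rintro ⟨rfl, hay, hy⟩
    exact ⟨rfl, .inr ⟨y, hay, hy⟩⟩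

theorem cons {c : V} {l : List V} (h : IsWalkFromTo E a b l) (hca : E c a) :
    IsWalkFromTo E c b (c :: l) :=
  cons_iff.2 ⟨rfl, .inr ⟨a, hca, h⟩⟩

variable {n m : V}

theorem exists_filter_eq_of_bypass (hE : E n m) (p : V → Bool) (hp : p n = false) :
    ∀ {a : V} {l : List V}, IsWalkFromTo (bypass E n m) a b l →
      ∃ l', IsWalkFromTo E a b l' ∧ l'.filter p = l.filter p
  | _, [], h => absurd rfl h.1
  | _, x :: l, h => by
    obtain ⟨rfl, ⟨rfl, rfl⟩ | ⟨c, ⟨-, -, hxc⟩, hc⟩⟩ := cons_iff.1 h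
    · exact ⟨[x], singleton_iff.2 ⟨rfl, rfl⟩, rfl⟩
    obtain ⟨l', hl', hfilter⟩ := exists_filter_eq_of_bypass hE p hp hc
    rcases hxc with hxc | ⟨hxn, rfl⟩
    · exact ⟨x :: l', hl'.cons hxc, by simp [List.filter_cons, hfilter]⟩
    · exact ⟨x :: n :: l', (hl'.cons hE).cons hxn, by simp [List.filter_cons, hp, hfilter]⟩

variable [DecidableEq V]

theorem filter_ne_bypass (hsuc : ∀ v, E n v → v = m) (hnm : n ≠ m) (hb : b ≠ n) :
    ∀ {a : V} {l : List V}, IsWalkFromTo E a b l → a ≠ n →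
      IsWalkFromTo (bypass E n m) a b (l.filter (· ≠ n))
  | _, [], h, _ => absurd rfl h.1
  | _, [x], h, hx => by
    obtain ⟨rfl, rfl⟩ := singleton_iff.1 h
    simpa [hx] using singleton_iff.2 ⟨rfl, rfl⟩
  | _, x :: y :: l, h, hx => by
    obtain ⟨rfl, hxy, hy⟩ := cons_cons_iff.1 h
    by_cases hyn : y = n
    · rw [hyn] at hxy hy
      cases l with
      | nil => exact absurd (singleton_iff.1 hy).2.symm hb
      | cons r l =>
        obtain ⟨-, hnr, hr⟩ := cons_cons_iff.1 hy
        have hrm : r = m := hsuc r hnr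
        have hrn : r ≠ n := fun h => hnm (h ▸ hrm)
        simpa [hx, hyn, hrn] using (filter_ne_bypass hsuc hnm hb hr hrn).cons
          (show bypass E n m x r from ⟨hx, hrn, .inr ⟨hxy, hrm⟩⟩)
    · simpa [hx, hyn] using (filter_ne_bypass hsuc hnm hb hy hyn).cons
        (show bypass E n m x y from ⟨hx, hyn, .inl hxy⟩)

end IsWalkFromTo

/-- The T1 transformation (removing a non-colored node `n` with unique successor
`m` and redirecting each edge `(p,n)` to `(p,m)`) preserves the set of event traces
of entry-to-exit paths. -/
theorem stmt4 {V : Type*} [DecidableEq V] (E : V → V → Prop)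
    (C : Set V) [DecidablePred (· ∈ C)] (top bot n m : V)
    (hnC : n ∉ C) (hntop : n ≠ top) (hnbot : n ≠ bot) (hnm : n ≠ m)
    (hsuc : ∀ v, E n v ↔ v = m) :
    {t | ∃ l, IsWalkFromTo E top bot l ∧
        l.filter (fun v => decide (v ∈ C ∨ v = top ∨ v = bot)) = t} =
    {t | ∃ l, IsWalkFromTo
        (fun u v => u ≠ n ∧ v ≠ n ∧ (E u v ∨ (E u n ∧ v = m))) top bot l ∧
        l.filter (fun v => decide (v ∈ C ∨ v = top ∨ v = bot)) = t} := by
  have hn : decide (n ∈ C ∨ n = top ∨ n = bot) = false := by simp [hnC, hntop, hnbot]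
  ext t
  constructor
  · rintro ⟨l, hl, rfl⟩
    refine ⟨_, hl.filter_ne_bypass (fun v => (hsuc v).1) hnm hnbot.symm hntop.symm, ?_⟩
    rw [List.filter_filter]
    exact List.filter_congr fun x _ => by by_cases hx : x = n <;> simp [hx, hn]
  · rintro ⟨l, hl, rfl⟩
    exact IsWalkFromTo.exists_filter_eq_of_bypass ((hsuc m).2 rfl) _ hn hl
end

section
/- Let G be a finite directed graph with entry ⊤ and exit ⊥, and let H be the node-induced subgraph on a subset R containing ⊤ and ⊥, with an edge (u,v) in H iff there is a path in G from u to v whose interior nodes avoid R. Then the event traces (subsequences in R) of ⊤-to-⊥ paths in G are exactly the node sequences of ⊤-to-⊥ paths in H. -/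
section

variable {V : Type*} {E : V → V → Prop} {a b : V}

theorem isWalkFromTo_iff {l : List V} :
    IsWalkFromTo E a b l ↔ ∃ t, l = a :: t ∧ (a :: t).getLast? = some b ∧ (a :: t).IsChain E := by
  constructor
  · rintro ⟨-, hhead, hlast, hchain⟩
    obtain ⟨t, rfl⟩ := List.head?_eq_some_iff.mp hhead
    exact ⟨t, rfl, hlast, hchain⟩
  · rintro ⟨t, rfl, hlast, hchain⟩
    exact ⟨List.cons_ne_nil a t, rfl, hlast, hchain⟩

theorem List.getLast?_filter_of_getLast? {p : V → Bool} {l : List V} (hl : l.getLast? = some b)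
    (hb : p b) : (l.filter p).getLast? = some b := by
  obtain ⟨l', rfl⟩ := List.getLast?_eq_some_iff.mp hl
  simp [List.filter_append, hb]

variable (E) (R : Set V) [DecidablePred (· ∈ R)]

/-- The edge relation of the graph `H`. -/
def contractAdj (u v : V) : Prop :=
  u ∈ R ∧ v ∈ R ∧ ∃ w : List V, (u :: (w ++ [v])).IsChain E ∧ ∀ x ∈ w, x ∉ R

variable {E R}

/-- The detour `w` is the part of the walk already left behind since the last node of `R`. -/
theorem isChain_contractAdj_filter :
    ∀ {a : V} {w l : List V}, a ∈ R → (∀ x ∈ w, x ∉ R) → (a :: (w ++ l)).IsChain E →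
      (a :: l.filter (· ∈ R)).IsChain (contractAdj E R)
  | a, _, [], _, _, _ => .singleton a
  | a, w, b :: l, ha, hw, hchain => by
    by_cases hb : b ∈ R
    · rw [List.isChain_cons_split] at hchain
      rw [List.filter_cons_of_pos (by simpa using hb)]
      exact .cons_cons ⟨ha, hb, w, hchain.1, hw⟩
        (isChain_contractAdj_filter (w := []) hb (by simp) hchain.2)
    · rw [List.filter_cons_of_neg (by simpa using hb)]
      refine isChain_contractAdj_filter (w := w ++ [b]) ha ?_ (by simpa using hchain)
      simpa [or_imp, forall_and] using ⟨hw, hb⟩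

theorem exists_isChain_filter_eq :
    ∀ {a : V} {l : List V}, a ∈ R → (a :: l).IsChain (contractAdj E R) →
      ∃ m, (a :: m).IsChain E ∧ (a :: m).getLast? = (a :: l).getLast? ∧
        (a :: m).filter (· ∈ R) = a :: l
  | a, [], ha, _ => ⟨[], .singleton a, rfl, by simp [ha]⟩
  | a, b :: l, ha, hchain => by
    obtain ⟨⟨-, hb, w, hw, hwR⟩, hchain⟩ := List.isChain_cons_cons.mp hchain
    obtain ⟨m, hm, hlast, hfilter⟩ := exists_isChain_filter_eq hb hchain
    refine ⟨w ++ b :: m, List.isChain_cons_split.mpr ⟨hw, hm⟩, ?_, ?_⟩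
    · rw [← List.cons_append, List.getLast?_append_cons, hlast, List.getLast?_cons_cons]
    · have hw : w.filter (· ∈ R) = [] := List.filter_eq_nil_iff.mpr (by simpa using hwR)
      rw [List.filter_cons_of_pos (by simpa using ha), List.filter_append, hw, hfilter]
      rfl

theorem IsWalkFromTo.filter_contractAdj {l : List V} (ha : a ∈ R) (hb : b ∈ R)
    (h : IsWalkFromTo E a b l) : IsWalkFromTo (contractAdj E R) a b (l.filter (· ∈ R)) := by
  obtain ⟨t, rfl, hlast, hchain⟩ := isWalkFromTo_iff.mp h
  refine isWalkFromTo_iff.mpr ⟨t.filter (· ∈ R), ?_, ?_, ?_⟩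
  · exact List.filter_cons_of_pos (by simpa using ha)
  · rw [← List.filter_cons_of_pos (p := (· ∈ R)) (by simpa using ha)]
    exact List.getLast?_filter_of_getLast? hlast (by simpa using hb)
  · exact isChain_contractAdj_filter (w := []) ha (by simp) hchain

theorem IsWalkFromTo.exists_filter_eq {t : List V} (ha : a ∈ R)
    (h : IsWalkFromTo (contractAdj E R) a b t) :
    ∃ l, IsWalkFromTo E a b l ∧ l.filter (· ∈ R) = t := by
  obtain ⟨t, rfl, hlast, hchain⟩ := isWalkFromTo_iff.mp h
  obtain ⟨m, hm, hmlast, hfilter⟩ := exists_isChain_filter_eq ha hchain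
  exact ⟨a :: m, isWalkFromTo_iff.mpr ⟨m, rfl, hmlast.trans hlast, hm⟩, hfilter⟩

end

theorem stmt9_general {V : Type*} (E : V → V → Prop)
    (R : Set V) [DecidablePred (· ∈ R)] (top bot : V)
    (htop : top ∈ R) (hbot : bot ∈ R) :
    {t | ∃ l, IsWalkFromTo E top bot l ∧ l.filter (fun v => decide (v ∈ R)) = t} =
    {l | IsWalkFromTo (fun u v => u ∈ R ∧ v ∈ R ∧
        ∃ w : List V, List.Chain E u (w ++ [v]) ∧ ∀ x ∈ w, x ∉ R) top bot l} := by
  ext t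
  exact ⟨fun ⟨l, hl, hlt⟩ => hlt ▸ hl.filter_contractAdj htop hbot,
    fun ht => ht.exists_filter_eq htop⟩

/-- The event traces of `⊤`-to-`⊥` walks in `G` are exactly the node sequences of
`⊤`-to-`⊥` walks in the induced graph `H` on `R`, where `H` has an edge `(u,v)` iff
`G` has a nontrivial path from `u` to `v` whose intermediate nodes avoid `R`. -/
theorem stmt9 {V : Type*} [Fintype V] [DecidableEq V] (E : V → V → Prop)
    (R : Set V) [DecidablePred (· ∈ R)] (top bot : V)
    (htop : top ∈ R) (hbot : bot ∈ R)
    (hcover : ∀ v, Relation.ReflTransGen E top v ∧ Relation.ReflTransGen E v bot) :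
    {t | ∃ l, IsWalkFromTo E top bot l ∧ l.filter (fun v => decide (v ∈ R)) = t} =
    {l | IsWalkFromTo (fun u v => u ∈ R ∧ v ∈ R ∧
        ∃ w : List V, List.Chain E u (w ++ [v]) ∧ ∀ x ∈ w, x ∉ R) top bot l} :=
  stmt9_general E R top bot htop hbot
end

section
/- If a branch node c is irrelevant (all walks leaving c rejoin at a unique successor without passing through any event node), then for any entry-to-exit walk through c and any alternative branch choice at c, there exists another entry-to-exit walk with the same event trace taking that alternative branch. -/
namespace List

variable {V : Type*}

theorem exists_eq_append_cons_of_exit {E : V → V → Prop} {S : Set V} {m : V}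
    (hleave : ∀ u ∈ S, ∀ v, v ∉ S → E u v → v = m) :
    ∀ {u : V} {l : List V}, u ∈ S → IsChain E (u :: l) → (∃ w ∈ l, w ∉ S) →
      ∃ P rest, l = P ++ m :: rest ∧ ∀ p ∈ P, p ∈ S
  | _, [], _, _, ⟨_, hw, _⟩ => absurd hw not_mem_nil
  | u, v :: l, hu, hchain, hexit => by
    rw [isChain_cons_cons] at hchain
    by_cases hv : v ∈ S
    · have hexit' : ∃ w ∈ l, w ∉ S := by
        obtain ⟨w, hw, hwS⟩ := hexit
        exact ⟨w, (mem_cons.1 hw).resolve_left (by rintro rfl; exact hwS hv), hwS⟩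
      obtain ⟨P, rest, rfl, hP⟩ := exists_eq_append_cons_of_exit hleave hv hchain.2 hexit'
      exact ⟨v :: P, rest, rfl, by simpa [hv] using hP⟩
    · exact ⟨[], l, by rw [hleave u hu v hv hchain.1]; rfl, by simp⟩

variable {a P Q rest : List V} {c m : V}

theorem IsChain.splice {R : V → V → Prop} {rest' : List V}
    (h : IsChain R (a ++ c :: (P ++ m :: rest))) (h' : IsChain R (c :: (Q ++ m :: rest'))) :
    IsChain R (a ++ c :: (Q ++ m :: rest)) := by
  rw [isChain_split, isChain_cons_split] at h ⊢
  exact ⟨h.1, (isChain_cons_split.1 h').1, h.2.2⟩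

theorem filter_splice {p : V → Bool} (hP : ∀ v ∈ c :: P, ¬p v) (hQ : ∀ v ∈ c :: Q, ¬p v) :
    filter p (a ++ c :: (Q ++ m :: rest)) = filter p (a ++ c :: (P ++ m :: rest)) := by
  simp only [← cons_append, filter_append, filter_eq_nil_iff.2 hP, filter_eq_nil_iff.2 hQ]

end List

open List in
theorem stmt10_general {V : Type*} [DecidableEq V] (E : V → V → Prop)
    (Ev : Set V) [DecidablePred (· ∈ Ev)] (top bot : V) (S : Set V) (c m : V)
    (hcS : c ∈ S)
    (hSEv : ∀ x ∈ S, x ∉ Ev)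
    (hleave : ∀ u ∈ S, ∀ v, v ∉ S → E u v → v = m)
    (htopS : top ∉ S) (hbotS : bot ∉ S)
    (hreach : ∀ v, Relation.ReflTransGen E v bot) :
    ∀ W, IsWalkFromTo E top bot W → c ∈ W → ∀ x, E c x →
      ∃ W', IsWalkFromTo E top bot W' ∧
        W'.filter (fun v => decide (v ∈ Ev ∨ v = top ∨ v = bot)) =
          W.filter (fun v => decide (v ∈ Ev ∨ v = top ∨ v = bot)) ∧
        ∃ a b, W' = a ++ c :: x :: b := by
  rintro W ⟨-, hhead, hlast, hchain⟩ hcW x hcx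
  obtain ⟨a, t, rfl⟩ := append_of_mem hcW
  have hbot : bot ∈ t := by
    have := mem_of_getLast? (by simpa [getLast?_append] using hlast)
    exact (mem_cons.1 this).resolve_left (by rintro rfl; exact hbotS hcS)
  obtain ⟨P, rest, rfl, hP⟩ :=
    exists_eq_append_cons_of_exit hleave hcS hchain.right_of_append ⟨bot, hbot, hbotS⟩
  obtain ⟨l, hl, hlast_l⟩ := exists_isChain_cons_of_relationReflTransGen (hreach x)
  obtain ⟨Q, rest', hQ, hQS⟩ := exists_eq_append_cons_of_exit hleave hcS (hl.cons_cons hcx)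
    ⟨bot, hlast_l ▸ getLast_mem _, hbotS⟩
  have hsilent : ∀ L : List V, (∀ v ∈ L, v ∈ S) →
      ∀ v ∈ c :: L, ¬decide (v ∈ Ev ∨ v = top ∨ v = bot) := fun L hL v hv => by
    have hvS : v ∈ S := (mem_cons.1 hv).elim (· ▸ hcS) (hL v)
    simp [hSEv v hvS, ne_of_mem_of_not_mem hvS htopS, ne_of_mem_of_not_mem hvS hbotS]
  refine ⟨a ++ c :: (Q ++ m :: rest), ⟨by simp, ?_, ?_, ?_⟩, ?_, ?_⟩
  · simpa [head?_append] using hhead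
  · rw [← cons_append, ← append_assoc, getLast?_append_of_ne_nil _ (cons_ne_nil _ _)] at hlast ⊢
    exact hlast
  · exact IsChain.splice hchain (hQ ▸ hl.cons_cons hcx)
  · exact filter_splice (hsilent P hP) (hsilent Q hQS)
  · rcases Q with _ | ⟨q, Q⟩ <;> simp only [nil_append, cons_append, cons.injEq] at hQ
    · exact ⟨a, rest, by rw [hQ.1]; rfl⟩
    · exact ⟨a, Q ++ m :: rest, by rw [hQ.1]; rfl⟩

/-- If `c` is an irrelevant branch node (witnessed by a subgraph `S` containing `c`
and all out-edges of `c`, containing no event node, with unique successor `m`),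
then for any entry-to-exit walk `W` through `c` and any out-edge `(c,x)`, there is
an entry-to-exit walk with the same event trace that takes the edge `(c,x)`. -/
theorem stmt10 {V : Type*} [DecidableEq V] (E : V → V → Prop)
    (Ev : Set V) [DecidablePred (· ∈ Ev)] (top bot : V) (S : Set V) (c m : V)
    (hcS : c ∈ S) (hcEv : c ∉ Ev)
    (hout : ∀ x, E c x → x ∈ S)
    (hSEv : ∀ x ∈ S, x ∉ Ev)
    (hmS : m ∉ S)
    (hleave : ∀ u ∈ S, ∀ v, v ∉ S → E u v → v = m)
    (htopS : top ∉ S) (hbotS : bot ∉ S)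
    (hreach : ∀ v, Relation.ReflTransGen E v bot) :
    ∀ W, IsWalkFromTo E top bot W → c ∈ W → ∀ x, E c x →
      ∃ W', IsWalkFromTo E top bot W' ∧
        W'.filter (fun v => decide (v ∈ Ev ∨ v = top ∨ v = bot)) =
          W.filter (fun v => decide (v ∈ Ev ∨ v = top ∨ v = bot)) ∧
        ∃ a b, W' = a ++ c :: x :: b :=
  stmt10_general E Ev top bot S c m hcS hSEv hleave htopS hbotS hreach
end
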